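/- arXiv:nlin/0504058 — 11 statements merged into one kernel-verified Lean document; each statement's English description precedes it below -/
import Mathlib

section
/- Let f : Q^3 → Q be any local rule and let k, n ≥ 1 be integers. If the cyclic-boundary transition function f_{(kn),*} : Q^{kn} → Q^{kn} is bijective, then the cyclic-boundary transition function f_{(n),*} : Q^n → Q^n is bijective. -/
/-- The state set `Q = {0,1}` as `ZMod 2`. -/
abbrev Q : Type := ZMod 2

/-- A triplet local rule `f : Q³ → Q`. -/
abbrev Rule : Type := Q → Q → Q → Q

/-- A configuration of length `n`. -/
abbrev Config (n : ℕ) : Type := Fin n → Q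

/-- The transition sending `x` to the word whose `i`-th letter is
`f (x (i-1)) (x i) (x (i+1))`, where the virtual boundary letters
`x₀` and `x_{n+1}` are given as `x0` and `xn1`. -/
def caTrans {n : ℕ} (f : Rule) (x0 xn1 : Q) (x : Config n) : Config n :=
  fun i =>
    f (if _h : i.1 = 0 then x0
       else x ⟨i.1 - 1, Nat.lt_of_le_of_lt (Nat.sub_le _ _) i.isLt⟩)
      (x i)
      (if h : i.1 + 1 < n then x ⟨i.1 + 1, h⟩ else xn1)

/-- The first letter `x₁` of a nonempty configuration. -/
def firstCell {n : ℕ} (hn : 0 < n) (x : Config n) : Q := x ⟨0, hn⟩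

/-- The last letter `xₙ` of a nonempty configuration. -/
def lastCell {n : ℕ} (hn : 0 < n) (x : Config n) : Q :=
  x ⟨n - 1, Nat.sub_lt hn Nat.one_pos⟩

/-- Fixed boundary `a-b` : `x₀ = a`, `x_{n+1} = b`. -/
def fixedBC {n : ℕ} (f : Rule) (a b : Q) : Config n → Config n :=
  fun x => caTrans f a b x

/-- Boundary `a-*` : `x₀ = a`, `x_{n+1} = xₙ`. -/
def leftFixedBC {n : ℕ} (hn : 0 < n) (f : Rule) (a : Q) : Config n → Config n :=
  fun x => caTrans f a (lastCell hn x) x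

/-- Boundary `*-b` : `x₀ = x₁`, `x_{n+1} = b`. -/
def rightFixedBC {n : ℕ} (hn : 0 < n) (f : Rule) (b : Q) : Config n → Config n :=
  fun x => caTrans f (firstCell hn x) b x

/-- Free boundary `*-*` : `x₀ = x₁`, `x_{n+1} = xₙ`. -/
def freeBC {n : ℕ} (hn : 0 < n) (f : Rule) : Config n → Config n :=
  fun x => caTrans f (firstCell hn x) (lastCell hn x) x

/-- Cyclic boundary `*` : `x₀ = xₙ`, `x_{n+1} = x₁`. -/
def cyclicBC {n : ℕ} (hn : 0 < n) (f : Rule) : Config n → Config n :=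
  fun x => caTrans f (lastCell hn x) (firstCell hn x) x

/-! Tiling a word `k` times is injective and commutes with the cyclic transition, so injectivity
of `f_{(kn),*}` pulls back to `f_{(n),*}`; an injective self-map of the finite set `Qⁿ` is
bijective. -/

lemma cyclicBC_apply {n : ℕ} (hn : 0 < n) (f : Rule) (x : Config n) (i : Fin n) :
    cyclicBC hn f x i =
      f (x ⟨(i + (n - 1)) % n, Nat.mod_lt _ hn⟩) (x i) (x ⟨(i + 1) % n, Nat.mod_lt _ hn⟩) := by
  have hi := i.isLt
  simp only [cyclicBC, caTrans, lastCell, firstCell]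
  congr 1
  · split_ifs with h0
    · exact congrArg x (Fin.ext (by simp [h0]))
    · refine congrArg x (Fin.ext ?_)
      dsimp only
      rw [show i.1 + (n - 1) = (i.1 - 1) + n * 1 by omega, Nat.add_mul_mod_self_left,
        Nat.mod_eq_of_lt (by omega)]
  · split_ifs with hs
    · exact congrArg x (Fin.ext (Nat.mod_eq_of_lt hs).symm)
    · exact congrArg x (Fin.ext (by simp [show i.1 + 1 = n by omega]))

def tile (k : ℕ) {n : ℕ} (hn : 0 < n) (x : Config n) : Config (k * n) :=
  fun i => x ⟨i % n, Nat.mod_lt _ hn⟩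

lemma tile_injective {k n : ℕ} (hk : 0 < k) (hn : 0 < n) : Function.Injective (tile k hn) := by
  intro x y hxy
  funext i
  have := congrFun hxy ⟨i, lt_of_lt_of_le i.isLt (Nat.le_mul_of_pos_left n hk)⟩
  simpa [tile, Nat.mod_eq_of_lt i.isLt] using this

lemma cyclicBC_tile {k n : ℕ} (hk : 0 < k) (hn : 0 < n) (f : Rule) (x : Config n) :
    cyclicBC (Nat.mul_pos hk hn) f (tile k hn x) = tile k hn (cyclicBC hn f x) := by
  funext i
  simp only [tile, cyclicBC_apply, Nat.mod_mod_of_dvd _ (Dvd.intro_left k rfl)]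
  congr 3
  · have hkn : k * n - 1 = (n - 1) + n * (k - 1) := by
      have := Nat.le_mul_of_pos_left n hk
      rw [Nat.mul_sub_one, mul_comm n k]
      omega
    rw [hkn, ← add_assoc, Nat.add_mul_mod_self_left, Nat.mod_add_mod]
  · rw [Nat.mod_add_mod]

theorem statement3 (f : Rule) (k n : ℕ) (hk : 1 ≤ k) (hn : 1 ≤ n)
    (h : Function.Bijective (cyclicBC (Nat.mul_pos hk hn) f)) :
    Function.Bijective (cyclicBC hn f) := by
  refine Finite.injective_iff_bijective.mp fun x y hxy => tile_injective hk hn (h.1 ?_)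
  rw [cyclicBC_tile hk hn, cyclicBC_tile hk hn, hxy]
end

section
/- Let f : Q^3 → Q be any local rule and let k, n ≥ 1 be integers. If the free-boundary transition function f_{((2k+1)n),*-*} : Q^{(2k+1)n} → Q^{(2k+1)n} is bijective, then the free-boundary transition function f_{(n),*-*} : Q^n → Q^n is bijective. -/
lemma freeBC_apply {n : ℕ} (hn : 0 < n) (f : Rule) (x : Config n) (i : Fin n) :
    freeBC hn f x i =
      f (if _h : i.1 = 0 then x ⟨0, hn⟩ else x ⟨i.1 - 1, by omega⟩) (x i)
        (if h : i.1 + 1 < n then x ⟨i.1 + 1, h⟩ else x ⟨n - 1, by omega⟩) := rfl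

/-- appending a copy of the last letter -/
def appendLast {m : ℕ} (hm : 0 < m) (x : Config m) : Config (m + 1) :=
  fun i => if h : i.1 < m then x ⟨i.1, h⟩ else x ⟨m - 1, Nat.sub_lt hm Nat.one_pos⟩

lemma freeBC_appendLast_lt {m : ℕ} (hm : 0 < m) (f : Rule) (x : Config m)
    (i : Fin (m + 1)) (h : i.1 < m) :
    freeBC (Nat.succ_pos m) f (appendLast hm x) i = freeBC hm f x ⟨i.1, h⟩ := by
  rw [freeBC_apply, freeBC_apply]
  have hA : (if _h : i.1 = 0 then appendLast hm x ⟨0, Nat.succ_pos m⟩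
      else appendLast hm x ⟨i.1 - 1, by omega⟩) =
      (if _h : (i.1 : ℕ) = 0 then x ⟨0, hm⟩ else x ⟨i.1 - 1, by omega⟩) := by
    by_cases h0 : i.1 = 0
    · rw [dif_pos h0, dif_pos h0, appendLast, dif_pos hm]
    · rw [dif_neg h0, dif_neg h0, appendLast, dif_pos (by omega : i.1 - 1 < m)]
  have hB : appendLast hm x i = x ⟨i.1, h⟩ := dif_pos h
  have hC : (if h' : i.1 + 1 < m + 1 then appendLast hm x ⟨i.1 + 1, h'⟩
      else appendLast hm x ⟨m + 1 - 1, by omega⟩) =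
      (if h' : i.1 + 1 < m then x ⟨i.1 + 1, h'⟩ else x ⟨m - 1, by omega⟩) := by
    rw [dif_pos (by omega : i.1 + 1 < m + 1)]
    by_cases h1 : i.1 + 1 < m
    · rw [dif_pos h1, appendLast, dif_pos h1]
    · rw [dif_neg h1, appendLast, dif_neg (by omega : ¬ (i.1 + 1 < m))]
  rw [hA, hB, hC]

lemma freeBC_appendLast_last {m : ℕ} (hm : 0 < m) (f : Rule) (x : Config m) :
    freeBC (Nat.succ_pos m) f (appendLast hm x) ⟨m, by omega⟩ =
      f (lastCell hm x) (lastCell hm x) (lastCell hm x) := by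
  rw [freeBC_apply]
  rw [dif_neg (by omega : ¬ (m = 0)), dif_neg (by omega : ¬ (m + 1 < m + 1))]
  have h1 : appendLast hm x ⟨m - 1, by omega⟩ = lastCell hm x := by
    rw [appendLast, dif_pos (by omega : m - 1 < m)]; rfl
  have h2 : appendLast hm x ⟨m, by omega⟩ = lastCell hm x := by
    rw [appendLast, dif_neg (by omega : ¬ (m < m))]; rfl
  have h3 : appendLast hm x ⟨m + 1 - 1, by omega⟩ = lastCell hm x := h2
  rw [h1, h2, h3]

/-- prepending a copy of the first letter -/
def prependFirst {m : ℕ} (hm : 0 < m) (x : Config m) : Config (m + 1) :=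
  fun i => if h : i.1 = 0 then x ⟨0, hm⟩ else x ⟨i.1 - 1, by omega⟩

lemma freeBC_prependFirst_succ {m : ℕ} (hm : 0 < m) (f : Rule) (x : Config m)
    (i : Fin (m + 1)) (j : ℕ) (hj : j < m) (hij : i.1 = j + 1) :
    freeBC (Nat.succ_pos m) f (prependFirst hm x) i = freeBC hm f x ⟨j, hj⟩ := by
  rw [freeBC_apply, freeBC_apply]
  have hA : (if _h : i.1 = 0 then prependFirst hm x ⟨0, Nat.succ_pos m⟩
      else prependFirst hm x ⟨i.1 - 1, by omega⟩) =
      (if _h : (j : ℕ) = 0 then x ⟨0, hm⟩ else x ⟨j - 1, by omega⟩) := by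
    rw [dif_neg (by omega : ¬ i.1 = 0)]
    by_cases h0 : j = 0
    · rw [dif_pos h0, prependFirst, dif_pos (by omega : i.1 - 1 = 0)]
    · rw [dif_neg h0, prependFirst, dif_neg (by omega : ¬ i.1 - 1 = 0)]
      congr 1
      ext
      simp only []
      omega
  have hB : prependFirst hm x i = x ⟨j, hj⟩ := by
    rw [prependFirst, dif_neg (by omega : ¬ i.1 = 0)]
    congr 1; ext; simp only []; omega
  have hC : (if h' : i.1 + 1 < m + 1 then prependFirst hm x ⟨i.1 + 1, h'⟩
      else prependFirst hm x ⟨m + 1 - 1, by omega⟩) =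
      (if h' : j + 1 < m then x ⟨j + 1, h'⟩ else x ⟨m - 1, by omega⟩) := by
    by_cases h1 : j + 1 < m
    · rw [dif_pos (by omega : i.1 + 1 < m + 1), dif_pos h1, prependFirst,
        dif_neg (by omega : ¬ i.1 + 1 = 0)]
      congr 1; exact Fin.ext (by show i.1 + 1 - 1 = j + 1; omega)
    · rw [dif_neg (by omega : ¬ i.1 + 1 < m + 1), dif_neg h1, prependFirst,
        dif_neg (by omega : ¬ m + 1 - 1 = 0)]
      congr 1
  rw [hA, hB, hC]

lemma freeBC_prependFirst_zero {m : ℕ} (hm : 0 < m) (f : Rule) (x : Config m) :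
    freeBC (Nat.succ_pos m) f (prependFirst hm x) ⟨0, Nat.succ_pos m⟩ =
      f (firstCell hm x) (firstCell hm x) (firstCell hm x) := by
  rw [freeBC_apply]
  rw [dif_pos rfl, dif_pos (by omega : 0 + 1 < m + 1)]
  have h1 : prependFirst hm x ⟨0, Nat.succ_pos m⟩ = firstCell hm x := dif_pos rfl
  have h2 : prependFirst hm x ⟨0 + 1, by omega⟩ = firstCell hm x := by
    rw [prependFirst, dif_neg (by omega : ¬ (0 + 1 = 0))]; rfl
  rw [h1, h2]

def GoodApp (f : Rule) (m : ℕ) : Prop :=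
  ∃ (hm : 0 < m) (x y : Config m), freeBC hm f x = freeBC hm f y ∧ x ≠ y ∧
    (lastCell hm x = lastCell hm y ∨ f 0 0 0 = f 1 1 1)

def GoodPre (f : Rule) (m : ℕ) : Prop :=
  ∃ (hm : 0 < m) (x y : Config m), freeBC hm f x = freeBC hm f y ∧ x ≠ y ∧
    (firstCell hm x = firstCell hm y ∨ f 0 0 0 = f 1 1 1)

lemma zmod2_pair (a b : Q) (hab : a ≠ b) : (a = 0 ∧ b = 1) ∨ (a = 1 ∧ b = 0) := by
  revert a b; decide

lemma GoodApp.succ {f : Rule} {m : ℕ} (h : GoodApp f m) : GoodApp f (m + 1) := by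
  obtain ⟨hm, x, y, hxy, hne, hside⟩ := h
  have hlast : f (lastCell hm x) (lastCell hm x) (lastCell hm x) =
      f (lastCell hm y) (lastCell hm y) (lastCell hm y) := by
    rcases hside with hs | hs
    · rw [hs]
    · by_cases hq : lastCell hm x = lastCell hm y
      · rw [hq]
      · rcases zmod2_pair _ _ hq with ⟨h1, h2⟩ | ⟨h1, h2⟩ <;> rw [h1, h2]
        · exact hs
        · exact hs.symm
  refine ⟨Nat.succ_pos m, appendLast hm x, appendLast hm y, ?_, ?_, ?_⟩
  · funext i
    by_cases hi : i.1 < m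
    · rw [freeBC_appendLast_lt hm f x i hi, freeBC_appendLast_lt hm f y i hi, hxy]
    · have hi' : i = ⟨m, by omega⟩ := by ext; simp only []; omega
      rw [hi', freeBC_appendLast_last, freeBC_appendLast_last]
      exact hlast
  · intro hEq
    apply hne
    funext j
    have := congrFun hEq ⟨j.1, by omega⟩
    rwa [show appendLast hm x ⟨j.1, by omega⟩ = x j from by
        rw [appendLast, dif_pos j.2],
      show appendLast hm y ⟨j.1, by omega⟩ = y j from by
        rw [appendLast, dif_pos j.2]] at this
  · have hx : lastCell (Nat.succ_pos m) (appendLast hm x) = lastCell hm x := by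
      show appendLast hm x ⟨m + 1 - 1, _⟩ = _
      rw [appendLast, dif_neg (by omega : ¬ (m + 1 - 1 < m))]; rfl
    have hy : lastCell (Nat.succ_pos m) (appendLast hm y) = lastCell hm y := by
      show appendLast hm y ⟨m + 1 - 1, _⟩ = _
      rw [appendLast, dif_neg (by omega : ¬ (m + 1 - 1 < m))]; rfl
    rcases hside with hs | hs
    · exact Or.inl (by rw [hx, hy, hs])
    · exact Or.inr hs

lemma GoodPre.succ {f : Rule} {m : ℕ} (h : GoodPre f m) : GoodPre f (m + 1) := by
  obtain ⟨hm, x, y, hxy, hne, hside⟩ := h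
  have hfirst : f (firstCell hm x) (firstCell hm x) (firstCell hm x) =
      f (firstCell hm y) (firstCell hm y) (firstCell hm y) := by
    rcases hside with hs | hs
    · rw [hs]
    · by_cases hq : firstCell hm x = firstCell hm y
      · rw [hq]
      · rcases zmod2_pair _ _ hq with ⟨h1, h2⟩ | ⟨h1, h2⟩ <;> rw [h1, h2]
        · exact hs
        · exact hs.symm
  refine ⟨Nat.succ_pos m, prependFirst hm x, prependFirst hm y, ?_, ?_, ?_⟩
  · funext i
    by_cases hi : i.1 = 0
    · have hi' : i = ⟨0, Nat.succ_pos m⟩ := by ext; simp only []; omega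
      rw [hi', freeBC_prependFirst_zero, freeBC_prependFirst_zero]
      exact hfirst
    · have hj : i.1 - 1 < m := by omega
      rw [freeBC_prependFirst_succ hm f x i (i.1 - 1) hj (by omega),
        freeBC_prependFirst_succ hm f y i (i.1 - 1) hj (by omega), hxy]
  · intro hEq
    apply hne
    funext j
    have := congrFun hEq ⟨j.1 + 1, by omega⟩
    have hx : prependFirst hm x ⟨j.1 + 1, by omega⟩ = x j := by
      rw [prependFirst, dif_neg (by omega : ¬ (j.1 + 1 = 0))]
      congr 1
    have hy : prependFirst hm y ⟨j.1 + 1, by omega⟩ = y j := by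
      rw [prependFirst, dif_neg (by omega : ¬ (j.1 + 1 = 0))]
      congr 1
    rwa [hx, hy] at this
  · have hx : firstCell (Nat.succ_pos m) (prependFirst hm x) = firstCell hm x := rfl
    have hy : firstCell (Nat.succ_pos m) (prependFirst hm y) = firstCell hm y := rfl
    rcases hside with hs | hs
    · exact Or.inl (by rw [hx, hy, hs])
    · exact Or.inr hs

lemma GoodApp.mono {f : Rule} {m M : ℕ} (h : GoodApp f m) (hM : m ≤ M) : GoodApp f M := by
  induction M, hM using Nat.le_induction with
  | base => exact h
  | succ M hM ih => exact ih.succ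

lemma GoodPre.mono {f : Rule} {m M : ℕ} (h : GoodPre f m) (hM : m ≤ M) : GoodPre f M := by
  induction M, hM using Nat.le_induction with
  | base => exact h
  | succ M hM ih => exact ih.succ

lemma GoodApp.not_inj {f : Rule} {m : ℕ} (h : GoodApp f m) (hm : 0 < m) :
    ¬ Function.Injective (freeBC hm f) := by
  obtain ⟨hm', x, y, hxy, hne, _⟩ := h
  exact fun hinj => hne (hinj hxy)

lemma GoodPre.not_inj {f : Rule} {m : ℕ} (h : GoodPre f m) (hm : 0 < m) :
    ¬ Function.Injective (freeBC hm f) := by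
  obtain ⟨hm', x, y, hxy, hne, _⟩ := h
  exact fun hinj => hne (hinj hxy)

def c3 (a b c : Q) : Config 3 :=
  fun i => if i.1 = 0 then a else if i.1 = 1 then b else c

lemma c3_ne {a b c a' b' c' : Q} (h : ¬ (a = a' ∧ b = b' ∧ c = c')) :
    c3 a b c ≠ c3 a' b' c' := by
  intro hEq
  exact h ⟨congrFun hEq ⟨0, by omega⟩, congrFun hEq ⟨1, by omega⟩, congrFun hEq ⟨2, by omega⟩⟩

set_option maxRecDepth 10000 in
lemma classify (f : Rule) :
    (∀ a b c, f a b c = f 0 0 0 + b) ∨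
    (∀ a b c, f a b c = f 0 0 0 + a + b + c) ∨
    (freeBC (by omega : 0 < 3) f (c3 0 0 0) = freeBC (by omega : 0 < 3) f (c3 1 1 1)) ∨
    (freeBC (by omega : 0 < 3) f (c3 0 0 0) = freeBC (by omega : 0 < 3) f (c3 0 0 1)) ∨
    (freeBC (by omega : 0 < 3) f (c3 0 1 0) = freeBC (by omega : 0 < 3) f (c3 1 1 0)) ∨
    (freeBC (by omega : 0 < 3) f (c3 0 0 0) = freeBC (by omega : 0 < 3) f (c3 1 0 0)) ∨
    (freeBC (by omega : 0 < 3) f (c3 0 1 0) = freeBC (by omega : 0 < 3) f (c3 0 1 1)) ∨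
    (freeBC (by omega : 0 < 3) f (c3 1 0 1) = freeBC (by omega : 0 < 3) f (c3 1 1 1)) ∨
    (freeBC (by omega : 0 < 3) f (c3 0 0 1) = freeBC (by omega : 0 < 3) f (c3 0 1 0)) ∨
    (freeBC (by omega : 0 < 3) f (c3 0 1 0) = freeBC (by omega : 0 < 3) f (c3 1 0 0)) ∨
    (freeBC (by omega : 0 < 3) f (c3 0 0 0) = freeBC (by omega : 0 < 3) f (c3 0 1 0)) ∨
    (freeBC (by omega : 0 < 3) f (c3 0 0 1) = freeBC (by omega : 0 < 3) f (c3 1 0 1)) ∨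
    (freeBC (by omega : 0 < 3) f (c3 0 1 1) = freeBC (by omega : 0 < 3) f (c3 1 1 1)) := by
  revert f
  decide

lemma freeBC_linear {n : ℕ} (hn : 0 < n) {f : Rule} {e : Q}
    (hf : ∀ a b c, f a b c = e + a + b + c) (x : Config n) (i : Fin n) :
    freeBC hn f x i =
      e + (if _h : i.1 = 0 then x ⟨0, hn⟩ else x ⟨i.1 - 1, by omega⟩) + x i +
        (if h : i.1 + 1 < n then x ⟨i.1 + 1, h⟩ else x ⟨n - 1, by omega⟩) := by
  rw [freeBC_apply, hf]

lemma zke (e a b c : Q) (h : a + b + c = 0) : e + a + b + c = e := by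
  revert e a b c; decide

lemma zsum3 (e a b c a' b' c' : Q) (h : e + a + b + c = e + a' + b' + c') :
    c + c' = (a + a') + (b + b') := by revert e a b c a' b' c'; decide

lemma zfirst (e a b a' b' : Q) (h : e + a + a + b = e + a' + a' + b') : b = b' := by
  revert e a b a' b'; decide

lemma zlast (e a b a' b' : Q) (h : e + a + b + b = e + a' + b' + b') : a = a' := by
  revert e a b a' b'; decide

lemma zsingle (e a b : Q) (h : e + a + a + a = e + b + b + b) : a = b := by
  revert e a b; decide

lemma zcancel (a b : Q) (h : a + b = 0) : a = b := by revert a b; decide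

/-- injectivity of the `e+a+b+c` rule when `3 ∤ n` -/
lemma linear_inj {n : ℕ} (hn : 0 < n) (f : Rule)
    (hf0 : ∀ a b c, f a b c = f 0 0 0 + a + b + c) (h3 : ¬ (3 : ℕ) ∣ n) :
    Function.Injective (freeBC hn f) := by
  obtain ⟨e, hf⟩ : ∃ e, ∀ a b c, f a b c = e + a + b + c := ⟨f 0 0 0, hf0⟩
  intro x y hxy
  have cell : ∀ (c : ℕ) (hc : c < n),
      e + (if _h : c = 0 then x ⟨0, hn⟩ else x ⟨c - 1, by omega⟩) + x ⟨c, hc⟩ +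
        (if h : c + 1 < n then x ⟨c + 1, h⟩ else x ⟨n - 1, by omega⟩) =
      e + (if _h : c = 0 then y ⟨0, hn⟩ else y ⟨c - 1, by omega⟩) + y ⟨c, hc⟩ +
        (if h : c + 1 < n then y ⟨c + 1, h⟩ else y ⟨n - 1, by omega⟩) := by
    intro c hc
    have := congrFun hxy ⟨c, hc⟩
    rwa [freeBC_linear hn hf, freeBC_linear hn hf] at this
  rcases eq_or_lt_of_le (Nat.succ_le_of_lt hn) with h1 | h2
  · -- n = 1
    funext i
    have hi : i = ⟨0, hn⟩ := by apply Fin.ext; omega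
    have := cell 0 hn
    rw [dif_pos rfl, dif_pos rfl, dif_neg (by omega : ¬ (0 + 1 < n)),
      dif_neg (by omega : ¬ (0 + 1 < n))] at this
    rw [show (⟨n - 1, by omega⟩ : Fin n) = ⟨0, hn⟩ from Fin.ext (by omega)] at this
    rw [hi]
    exact zsingle _ _ _ this
  · -- 2 ≤ n
    set d : ℕ → Q := fun j => if h : j < n then x ⟨j, h⟩ + y ⟨j, h⟩ else 0 with hd
    have hdj : ∀ j (h : j < n), d j = x ⟨j, h⟩ + y ⟨j, h⟩ := fun j h => dif_pos h
    have eq0 : d 1 = 0 := by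
      have := cell 0 (by omega)
      rw [dif_pos rfl, dif_pos rfl, dif_pos (by omega : 0 + 1 < n),
        dif_pos (by omega : 0 + 1 < n)] at this
      rw [hdj 1 (by omega), zfirst _ _ _ _ _ this]
      exact CharTwo.add_self_eq_zero _
    have eqmid : ∀ j, j + 2 < n → d (j + 2) = d j + d (j + 1) := by
      intro j hj
      have := cell (j + 1) (by omega)
      rw [dif_neg (by omega : ¬ (j + 1 = 0)), dif_neg (by omega : ¬ (j + 1 = 0)),
        dif_pos (by omega : j + 1 + 1 < n), dif_pos (by omega : j + 1 + 1 < n)] at this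
      have h' := zsum3 _ _ _ _ _ _ _ this
      rw [hdj (j + 2) (by omega), hdj j (by omega), hdj (j + 1) (by omega)]
      rw [show (⟨j + 1 - 1, by omega⟩ : Fin n) = ⟨j, by omega⟩ from
          Fin.ext (show j + 1 - 1 = j by omega),
        show (⟨j + 1 + 1, by omega⟩ : Fin n) = ⟨j + 2, by omega⟩ from
          Fin.ext (show j + 1 + 1 = j + 2 by omega)] at h'
      exact h'
    have eqlast : d (n - 2) = 0 := by
      have := cell (n - 1) (by omega)
      rw [dif_neg (by omega : ¬ (n - 1 = 0)), dif_neg (by omega : ¬ (n - 1 = 0)),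
        dif_neg (by omega : ¬ (n - 1 + 1 < n)), dif_neg (by omega : ¬ (n - 1 + 1 < n))] at this
      have h' := zlast _ _ _ _ _ this
      rw [show (⟨n - 1 - 1, by omega⟩ : Fin n) = ⟨n - 2, by omega⟩ from
          Fin.ext (show n - 1 - 1 = n - 2 by omega)] at h'
      rw [hdj (n - 2) (by omega), h']
      exact CharTwo.add_self_eq_zero _
    have claim : ∀ j, j < n → d j = if j % 3 = 1 then 0 else d 0 := by
      intro j
      induction j using Nat.strong_induction_on with
      | _ j ih =>
        intro hjn
        match j, ih with
        | 0, _ => simp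
        | 1, _ => simpa using eq0
        | (i + 2), ih =>
          rw [eqmid i hjn, ih i (by omega) (by omega), ih (i + 1) (by omega) (by omega)]
          rcases (by omega : i % 3 = 0 ∨ i % 3 = 1 ∨ i % 3 = 2) with h0 | h0 | h0
          · rw [if_neg (by omega : ¬ (i % 3 = 1)), if_pos (by omega : (i + 1) % 3 = 1),
              if_neg (by omega : ¬ ((i + 2) % 3 = 1)), add_zero]
          · rw [if_pos (by omega : i % 3 = 1), if_neg (by omega : ¬ ((i + 1) % 3 = 1)),
              if_neg (by omega : ¬ ((i + 2) % 3 = 1)), zero_add]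
          · rw [if_neg (by omega : ¬ (i % 3 = 1)), if_neg (by omega : ¬ ((i + 1) % 3 = 1)),
              if_pos (by omega : (i + 2) % 3 = 1)]
            exact CharTwo.add_self_eq_zero _
    have hd0 : d 0 = 0 := by
      have := claim (n - 2) (by omega)
      rw [eqlast, if_neg (by omega : ¬ ((n - 2) % 3 = 1))] at this
      exact this.symm
    funext i
    have hcl := claim i.1 i.2
    rw [hdj i.1 i.2] at hcl
    have hz : x ⟨i.1, i.2⟩ + y ⟨i.1, i.2⟩ = 0 := by
      by_cases h : i.1 % 3 = 1
      · rw [hcl, if_pos h]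
      · rw [hcl, if_neg h, hd0]
    have := zcancel _ _ hz
    simpa using this

/-- non-injectivity of the `e+a+b+c` rule when `3 ∣ N` -/
lemma linear_noninj {N : ℕ} (hN : 0 < N) (f : Rule)
    (hf0 : ∀ a b c, f a b c = f 0 0 0 + a + b + c) (h3 : (3 : ℕ) ∣ N) :
    ¬ Function.Injective (freeBC hN f) := by
  obtain ⟨e, hf⟩ : ∃ e, ∀ a b c, f a b c = e + a + b + c := ⟨f 0 0 0, hf0⟩
  intro hinj
  have hN3 : 3 ≤ N := Nat.le_of_dvd hN h3
  set z' : ℕ → Q := fun j => if j % 3 = 1 then 0 else 1 with hz'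
  have hz1 : ∀ j, j % 3 = 1 → z' j = 0 := fun j h => if_pos h
  have hz0 : ∀ j, ¬ (j % 3 = 1) → z' j = 1 := fun j h => if_neg h
  have hRi : ∀ i, freeBC hN f (fun _ => (0 : Q)) i = e := by
    intro i
    rw [freeBC_linear hN hf]
    split_ifs <;> exact zke e 0 0 0 (by decide)
  have hLi : ∀ i, freeBC hN f (fun i => z' i.1) i = e := by
    intro i
    rw [freeBC_linear hN hf]
    by_cases h0 : i.1 = 0
    · rw [dif_pos h0, dif_pos (by omega : i.1 + 1 < N)]
      show e + z' 0 + z' i.1 + z' (i.1 + 1) = e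
      rw [hz0 0 (by omega), hz0 i.1 (by omega), hz1 (i.1 + 1) (by omega)]
      exact zke e 1 1 0 (by decide)
    · by_cases hL : i.1 + 1 < N
      · rw [dif_neg h0, dif_pos hL]
        show e + z' (i.1 - 1) + z' i.1 + z' (i.1 + 1) = e
        rcases (by omega : i.1 % 3 = 0 ∨ i.1 % 3 = 1 ∨ i.1 % 3 = 2) with h | h | h
        · rw [hz0 (i.1 - 1) (by omega), hz0 i.1 (by omega), hz1 (i.1 + 1) (by omega)]
          exact zke e 1 1 0 (by decide)
        · rw [hz0 (i.1 - 1) (by omega), hz1 i.1 (by omega), hz0 (i.1 + 1) (by omega)]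
          exact zke e 1 0 1 (by decide)
        · rw [hz1 (i.1 - 1) (by omega), hz0 i.1 (by omega), hz0 (i.1 + 1) (by omega)]
          exact zke e 0 1 1 (by decide)
      · rw [dif_neg h0, dif_neg hL]
        show e + z' (i.1 - 1) + z' i.1 + z' (N - 1) = e
        have hi : i.1 = N - 1 := by omega
        rw [hz1 (i.1 - 1) (by omega), hz0 i.1 (by omega), hz0 (N - 1) (by omega)]
        exact zke e 0 1 1 (by decide)
  have key : freeBC hN f (fun i => z' i.1) = freeBC hN f (fun _ => 0) := by
    funext i
    rw [hLi i, hRi i]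
  have := congrFun (hinj key) ⟨0, hN⟩
  have h10 : z' 0 ≠ 0 := by rw [hz0 0 (by omega)]; decide
  exact h10 this

lemma center_bij {n : ℕ} (hn : 0 < n) (f : Rule)
    (hf0 : ∀ a b c, f a b c = f 0 0 0 + b) :
    Function.Bijective (freeBC hn f) := by
  obtain ⟨e, hf⟩ : ∃ e, ∀ a b c, f a b c = e + b := ⟨f 0 0 0, hf0⟩
  rw [← Finite.injective_iff_bijective]
  intro x y hxy
  funext i
  have := congrFun hxy i
  rw [freeBC_apply, freeBC_apply, hf, hf] at this
  exact add_left_cancel this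

lemma lastCell_c3 (a b c : Q) : lastCell (by omega) (c3 a b c) = c := rfl
lemma firstCell_c3 (a b c : Q) : firstCell (by omega) (c3 a b c) = a := rfl

lemma goodApp_of_c3 {f : Rule} {a b c a' b' c' : Q}
    (hcol : freeBC (by omega : 0 < 3) f (c3 a b c) = freeBC (by omega : 0 < 3) f (c3 a' b' c'))
    (hne : ¬ (a = a' ∧ b = b' ∧ c = c'))
    (hside : c = c' ∨ f 0 0 0 = f 1 1 1) : GoodApp f 3 :=
  ⟨by omega, c3 a b c, c3 a' b' c', hcol, c3_ne hne, by
    rcases hside with hs | hs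
    · exact Or.inl (by rw [lastCell_c3, lastCell_c3, hs])
    · exact Or.inr hs⟩

lemma goodPre_of_c3 {f : Rule} {a b c a' b' c' : Q}
    (hcol : freeBC (by omega : 0 < 3) f (c3 a b c) = freeBC (by omega : 0 < 3) f (c3 a' b' c'))
    (hne : ¬ (a = a' ∧ b = b' ∧ c = c'))
    (hside : a = a' ∨ f 0 0 0 = f 1 1 1) : GoodPre f 3 :=
  ⟨by omega, c3 a b c, c3 a' b' c', hcol, c3_ne hne, by
    rcases hside with hs | hs
    · exact Or.inl (by rw [firstCell_c3, firstCell_c3, hs])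
    · exact Or.inr hs⟩


theorem statement4 (f : Rule) (k n : ℕ) (hk : 1 ≤ k) (hn : 1 ≤ n)
    (h : Function.Bijective
      (freeBC (show 0 < (2 * k + 1) * n from Nat.mul_pos (Nat.succ_pos (2 * k)) hn) f)) :
    Function.Bijective (freeBC hn f) := by
  have hN : 0 < (2 * k + 1) * n := Nat.mul_pos (Nat.succ_pos (2 * k)) hn
  have hN3 : 3 ≤ (2 * k + 1) * n := by
    calc 3 = 3 * 1 := rfl
    _ ≤ (2 * k + 1) * n := Nat.mul_le_mul (by omega) hn
  rcases classify f with hc | hl | hD | hD | hD | hD | hD | hD | hD | hD | hD | hD | hD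
  · exact center_bij hn f hc
  · by_cases h3 : (3 : ℕ) ∣ n
    · exact absurd h.injective (linear_noninj hN f hl (h3.mul_left _))
    · exact Finite.injective_iff_bijective.mp (linear_inj hn f hl h3)
  · exact absurd h.injective
      (((goodApp_of_c3 hD (by decide) (Or.inr (congrFun hD ⟨0, by omega⟩))).mono hN3).not_inj hN)
  · exact absurd h.injective
      (((goodPre_of_c3 hD (by decide) (Or.inl rfl)).mono hN3).not_inj hN)
  · exact absurd h.injective
      (((goodApp_of_c3 hD (by decide) (Or.inl rfl)).mono hN3).not_inj hN)
  · exact absurd h.injective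
      (((goodApp_of_c3 hD (by decide) (Or.inl rfl)).mono hN3).not_inj hN)
  · exact absurd h.injective
      (((goodPre_of_c3 hD (by decide) (Or.inl rfl)).mono hN3).not_inj hN)
  · exact absurd h.injective
      (((goodApp_of_c3 hD (by decide) (Or.inl rfl)).mono hN3).not_inj hN)
  · exact absurd h.injective
      (((goodPre_of_c3 hD (by decide) (Or.inl rfl)).mono hN3).not_inj hN)
  · exact absurd h.injective
      (((goodApp_of_c3 hD (by decide) (Or.inl rfl)).mono hN3).not_inj hN)
  · exact absurd h.injective
      (((goodApp_of_c3 hD (by decide) (Or.inl rfl)).mono hN3).not_inj hN)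
  · exact absurd h.injective
      (((goodApp_of_c3 hD (by decide) (Or.inl rfl)).mono hN3).not_inj hN)
  · exact absurd h.injective
      (((goodApp_of_c3 hD (by decide) (Or.inl rfl)).mono hN3).not_inj hN)
end

section
/- Let f_90 be the local rule f_90(a,b,c) = a + c. For every integer n ≥ 1 and all a, b ∈ Q, the fixed-boundary transition function (f_90)_{(n),a-b} : Q^n → Q^n is bijective if and only if n is even; that is, CA-90_{a-b}(n) is reversible iff n ≡ 0 (mod 2). -/
/-- Rule 90 : `f(a,b,c) = a + c`. -/
def f90 : Rule := fun a _ c => a + c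

/-- The word `a x₁ ⋯ xₙ b b ⋯`, indexed from `0`. -/
def boundaryExtend {n : ℕ} (a b : Q) (x : Config n) (j : ℕ) : Q :=
  if j = 0 then a else if h : j - 1 < n then x ⟨j - 1, by omega⟩ else b

theorem caTrans_apply_eq_boundaryExtend {n : ℕ} (f : Rule) (a b : Q) (x : Config n)
    (i : Fin n) :
    caTrans f a b x i =
      f (boundaryExtend a b x i) (boundaryExtend a b x (i + 1))
        (boundaryExtend a b x (i + 2)) := by
  have hi := i.isLt
  simp only [caTrans, boundaryExtend, Nat.add_sub_cancel, Nat.add_eq_zero_iff, one_ne_zero,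
    OfNat.ofNat_ne_zero, and_false, if_false, dif_pos hi]
  congr 1
  split_ifs <;> first | rfl | omega

theorem caTrans_f90_sub {n : ℕ} (a b a' b' : Q) (x y : Config n) :
    caTrans f90 a b x - caTrans f90 a' b' y = caTrans f90 (a - a') (b - b') (x - y) := by
  funext i
  simp only [Pi.sub_apply, caTrans, f90]
  split_ifs <;> ring

theorem caTrans_f90_eq_zero_iff {n : ℕ} (a b : Q) (z : Config n) :
    caTrans f90 a b z = 0 ↔
      ∀ i < n, boundaryExtend a b z (i + 2) = boundaryExtend a b z i := by
  simp only [funext_iff, caTrans_apply_eq_boundaryExtend, f90, Pi.zero_apply,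
    CharTwo.add_eq_zero, Fin.forall_iff, eq_comm]

theorem eq_apply_mod_two_of_periodic {α : Type*} {w : ℕ → α} {m : ℕ}
    (hw : ∀ i, i + 2 ≤ m → w (i + 2) = w i) : ∀ j ≤ m, w j = w (j % 2)
  | 0, _ => rfl
  | 1, _ => rfl
  | j + 2, hj => by
    rw [hw j hj, eq_apply_mod_two_of_periodic hw j (by omega), Nat.add_mod_right]

theorem eq_zero_of_caTrans_f90_eq_zero_of_even {n : ℕ} (hn : n % 2 = 0) (z : Config n)
    (hz : caTrans f90 0 0 z = 0) : z = 0 := by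
  set w := boundaryExtend 0 0 z
  have hw : ∀ j ≤ n + 1, w j = w (j % 2) :=
    eq_apply_mod_two_of_periodic fun i hi => (caTrans_f90_eq_zero_iff 0 0 z).1 hz i (by omega)
  have hw0 : w 0 = 0 := rfl
  have hw1 : w 1 = 0 := by
    have hlast : w (n + 1) = 0 := by simp [w, boundaryExtend]
    rwa [hw (n + 1) le_rfl, Nat.succ_mod_two_eq_one_iff.2 hn] at hlast
  funext j
  have hj : z j = w (j + 1) := by simp [w, boundaryExtend]
  rw [hj, hw _ (by omega), Pi.zero_apply]
  rcases Nat.mod_two_eq_zero_or_one (j + 1) with h | h <;> rw [h] <;> assumption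

theorem exists_ne_zero_caTrans_f90_eq_zero_of_odd {n : ℕ} (hn : n % 2 = 1) :
    ∃ z : Config n, z ≠ 0 ∧ caTrans f90 0 0 z = 0 := by
  -- `z = 1 0 1 0 ⋯ 1`, whose extension `0 1 0 1 ⋯ 1 0` is `j ↦ j mod 2`
  refine ⟨fun j => ((j + 1 : ℕ) : Q), fun h => ?_, ?_⟩
  · simpa using congrFun h ⟨0, by omega⟩
  · have hext : ∀ j ≤ n + 1, boundaryExtend 0 0 (fun j : Fin n => ((j + 1 : ℕ) : Q)) j = j := by
      intro j hj
      unfold boundaryExtend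
      split_ifs with h0 hlt
      · simp [h0]
      · simp [Nat.sub_add_cancel (Nat.one_le_iff_ne_zero.2 h0)]
      · rw [show j = n + 1 by omega, eq_comm, ZMod.natCast_eq_zero_iff_even]
        exact Nat.even_add_one.2 (Nat.not_even_iff_odd.2 (Nat.odd_iff.2 hn))
    rw [caTrans_f90_eq_zero_iff]
    intro i hi
    rw [hext _ (by omega), hext _ (by omega), Nat.cast_add, show ((2 : ℕ) : Q) = 0 from rfl,
      add_zero]

theorem statement8_general (n : ℕ) (a b : Q) :
    Function.Bijective (fixedBC (n := n) f90 a b) ↔ n % 2 = 0 := by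
  have hsub : ∀ x y : Config n,
      fixedBC f90 a b x - fixedBC f90 a b y = caTrans f90 0 0 (x - y) := fun x y => by
    rw [fixedBC, fixedBC, caTrans_f90_sub, sub_self, sub_self]
  rw [← Finite.injective_iff_bijective]
  constructor
  · intro hinj
    by_contra hodd
    obtain ⟨z, hz, hker⟩ := exists_ne_zero_caTrans_f90_eq_zero_of_odd (n := n) (by omega)
    refine hz (hinj (sub_eq_zero.1 ?_))
    rw [hsub, sub_zero, hker]
  · intro heven x y hxy
    exact sub_eq_zero.1 <|
      eq_zero_of_caTrans_f90_eq_zero_of_even heven _ (by rw [← hsub, hxy, sub_self])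

theorem statement8 (n : ℕ) (hn : 1 ≤ n) (a b : Q) :
    Function.Bijective (fixedBC (n := n) f90 a b) ↔ n % 2 = 0 :=
  statement8_general n a b
end

section
/- Let f_90 be the local rule f_90(a,b,c) = a + c. For every integer n ≥ 1 and all a, b ∈ Q, the transition functions (f_90)_{(n),a-*} and (f_90)_{(n),*-b} on Q^n are bijective; that is, CA-90_{a-*}(n) and CA-90_{*-b}(n) are reversible for all positive integers n. -/
/-!
Rule 90 is additive, so the difference `e` of two preimages of one word, padded with its
virtual letters `e₀, e_{n+1}`, satisfies `e_{k-1} + e_{k+1} = 0`. For the `a-*` boundary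
`e₀ = 0` and `e_{n+1} = eₙ`: thus `e` vanishes at every even index, and since one of `n`, `n + 1`
is even it vanishes at the other one too, hence at every odd index. The `*-b` boundary is the
mirror image of the `a-*` boundary, and rule 90 is symmetric. Finally, an injective self-map of
the finite set `Qⁿ` is bijective.
-/

theorem eq_zero_iff_of_add_eq_zero {G : Type*} [AddCommGroup G] {u v : G} (h : u + v = 0) :
    u = 0 ↔ v = 0 := by
  rw [eq_neg_of_add_eq_zero_left h, neg_eq_zero]

theorem eq_zero_of_add_add_two_eq_zero {G : Type*} [AddCommGroup G] {e : ℕ → G} {N : ℕ}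
    (h0 : e 0 = 0) (hstep : ∀ k, k + 2 ≤ N + 1 → e k + e (k + 2) = 0)
    (hend : e N = e (N + 1)) : ∀ k ≤ N + 1, e k = 0 := by
  have hparity : ∀ k ≤ N + 1, (e k = 0 ↔ e (k % 2) = 0) := by
    intro k
    induction k using Nat.strong_induction_on with
    | _ k ih =>
      intro hk
      match k, ih with
      | 0, _ | 1, _ => rfl
      | k + 2, ih =>
        rw [← eq_zero_iff_of_add_eq_zero (hstep k hk), ih k (by omega) (by omega),
          Nat.add_mod_right]
  have h1 : e 1 = 0 := by
    rcases Nat.even_or_odd N with hN | hN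
    · rw [← Nat.succ_mod_two_eq_one_iff.mpr (Nat.even_iff.mp hN), ← hparity (N + 1) le_rfl,
        ← hend, hparity N (by omega), Nat.even_iff.mp hN, h0]
    · rw [← Nat.odd_iff.mp hN, ← hparity N (by omega), hend, hparity (N + 1) le_rfl,
        Nat.succ_mod_two_eq_zero_iff.mpr (Nat.odd_iff.mp hN), h0]
  intro k hk
  rw [hparity k hk]
  rcases Nat.mod_two_eq_zero_or_one k with h | h <;> rw [h] <;> assumption

/-- `padded x0 xn1 x k` is the letter `x_k` of the paper's 1-based indexing, extended by the
virtual letters `x₀ = x0` and `x_{n+1} = xn1`. -/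
def padded {n : ℕ} (x0 xn1 : Q) (x : Config n) : ℕ → Q
  | 0 => x0
  | k + 1 => if h : k < n then x ⟨k, h⟩ else xn1

theorem caTrans_apply {n : ℕ} (f : Rule) (x0 xn1 : Q) (x : Config n) (i : Fin n) :
    caTrans f x0 xn1 x i =
      f (padded x0 xn1 x i) (padded x0 xn1 x (i + 1)) (padded x0 xn1 x (i + 2)) := by
  obtain ⟨_ | j, hi⟩ := i
  · simp [caTrans, padded, hi]
  · simp [caTrans, padded, hi, (by omega : j < n)]

theorem leftFixedBC_f90_injective {n : ℕ} (hn : 0 < n) (a : Q) :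
    Function.Injective (leftFixedBC hn f90 a) := by
  intro x y hxy
  set e : ℕ → Q := fun k => padded a (lastCell hn x) x k - padded a (lastCell hn y) y k
  have hstep : ∀ k, k + 2 ≤ n + 1 → e k + e (k + 2) = 0 := by
    intro k hk
    have := congrFun hxy ⟨k, by omega⟩
    simp only [leftFixedBC, caTrans_apply, f90] at this
    simp only [e]
    linear_combination this
  have hend : e n = e (n + 1) := by
    obtain ⟨m, rfl⟩ := Nat.exists_eq_add_of_lt hn
    simp [e, padded, lastCell]
  have hzero := eq_zero_of_add_add_two_eq_zero (sub_self a) hstep hend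
  funext i
  simpa [e, padded, sub_eq_zero] using hzero (i + 1) (by omega)

theorem leftFixedBC_f90_bijective {n : ℕ} (hn : 0 < n) (a : Q) :
    Function.Bijective (leftFixedBC hn f90 a) :=
  Finite.injective_iff_bijective.mp (leftFixedBC_f90_injective hn a)

def mirrorRule (f : Rule) : Rule := fun p q r => f r q p

theorem mirrorRule_f90 : mirrorRule f90 = f90 :=
  funext₃ fun p _ r => add_comm r p

theorem rightFixedBC_eq_comp {n : ℕ} (hn : 0 < n) (f : Rule) (b : Q) :
    rightFixedBC hn f b =
      (· ∘ Fin.rev) ∘ leftFixedBC hn (mirrorRule f) b ∘ (· ∘ Fin.rev) := by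
  funext x i
  simp only [rightFixedBC, leftFixedBC, caTrans, mirrorRule, firstCell, lastCell,
    Function.comp_apply, Fin.rev_rev]
  -- each branch either has contradictory index conditions or reads the same cell on both sides
  congr 1 <;> split_ifs <;> simp only [Fin.val_rev] at * <;>
    first | omega | (congr 1; ext; simp only [Fin.val_rev]; omega)

theorem rightFixedBC_f90_bijective {n : ℕ} (hn : 0 < n) (b : Q) :
    Function.Bijective (rightFixedBC hn f90 b) := by
  have hrev : Function.Bijective fun x : Config n => x ∘ Fin.rev :=
    Function.Involutive.bijective fun x => funext fun i => congrArg x (Fin.rev_rev i)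
  rw [rightFixedBC_eq_comp, mirrorRule_f90]
  exact hrev.comp ((leftFixedBC_f90_bijective hn b).comp hrev)

theorem statement9 (n : ℕ) (hn : 1 ≤ n) (a b : Q) :
    Function.Bijective (leftFixedBC hn f90 a) ∧
    Function.Bijective (rightFixedBC hn f90 b) :=
  ⟨leftFixedBC_f90_bijective hn a, rightFixedBC_f90_bijective hn b⟩
end

section
/- Let f_90 be the local rule f_90(a,b,c) = a + c. For every integer n ≥ 1, neither the free-boundary transition function (f_90)_{(n),*-*} nor the cyclic-boundary transition function (f_90)_{(n),*} on Q^n is bijective; that is, CA-90_{*-*}(n) and CA-90_{*}(n) are not reversible for any positive integer n. -/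
/-! A constant configuration sees its own letter at both virtual boundary cells under the free and
the cyclic boundary, so it is mapped to the constant `f a a a`. Rule 90 sends both constant
configurations to `0`, hence is not injective under either boundary. -/

theorem caTrans_const {n : ℕ} (f : Rule) (a : Q) :
    caTrans f a a (fun _ : Fin n => a) = fun _ => f a a a := by
  funext i
  simp only [caTrans, dite_eq_ite, ite_self]

theorem freeBC_const {n : ℕ} (hn : 0 < n) (f : Rule) (a : Q) :
    freeBC hn f (fun _ => a) = fun _ => f a a a :=
  caTrans_const f a

theorem cyclicBC_const {n : ℕ} (hn : 0 < n) (f : Rule) (a : Q) :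
    cyclicBC hn f (fun _ => a) = fun _ => f a a a :=
  caTrans_const f a

theorem not_injective_of_const_eq {n : ℕ} (hn : 0 < n) (g : Config n → Config n)
    (hg : g (fun _ => 0) = g (fun _ => 1)) : ¬ Function.Injective g := fun hinj =>
  zero_ne_one (congrFun (hinj hg) ⟨0, hn⟩)

theorem f90_self (a : Q) : f90 a a a = 0 := CharTwo.add_self_eq_zero a

theorem statement10 (n : ℕ) (hn : 1 ≤ n) :
    ¬ Function.Bijective (freeBC hn f90) ∧ ¬ Function.Bijective (cyclicBC hn f90) := by
  refine ⟨fun h => not_injective_of_const_eq hn _ ?_ h.1,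
    fun h => not_injective_of_const_eq hn _ ?_ h.1⟩
  · simp only [freeBC_const, f90_self]
  · simp only [cyclicBC_const, f90_self]
end

section
/- Let f_102 be the local rule f_102(a,b,c) = b + c. For every integer n ≥ 1 and all a, b ∈ Q, the transition functions (f_102)_{(n),a-b} and (f_102)_{(n),*-b} on Q^n are bijective; that is, CA-102_{a-b}(n) and CA-102_{*-b}(n) are reversible for all positive integers n. -/
/-- Rule 102 : `f(a,b,c) = b + c`. -/
def f102 : Rule := fun _ b c => b + c

/-! Rule 102 ignores the left neighbour, so the `*-b` transition coincides with the `a-b` one, and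
since `c ↦ c + r` is injective a preimage is recovered cell by cell from right to left, starting
at the fixed right boundary. Injectivity of a self-map of a finite set gives bijectivity. -/

open Function

theorem caTrans_injective_of_ignoresLeft (g : Q → Q → Q) (hg : ∀ r, Injective (g · r))
    {n : ℕ} (x0 xn1 : Q) : Injective (caTrans (n := n) (fun _ c r => g c r) x0 xn1) := by
  intro x x' h
  cases n with
  | zero => exact funext finZeroElim
  | succ n =>
    funext i
    induction i using Fin.reverseInduction with
    | last => exact hg xn1 (by simpa [caTrans] using congrFun h (Fin.last n))
    | cast i ih =>
      have hi := congrFun h i.castSucc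
      simp only [caTrans, Fin.val_castSucc, Nat.add_lt_add_iff_right, i.isLt, dif_pos] at hi
      change g _ (x i.succ) = g _ (x' i.succ) at hi
      exact hg _ (ih ▸ hi)

theorem statement12 (n : ℕ) (hn : 1 ≤ n) (a b : Q) :
    Function.Bijective (fixedBC (n := n) f102 a b) ∧
    Function.Bijective (rightFixedBC hn f102 b) := by
  have hfixed : Bijective (fixedBC (n := n) f102 a b) :=
    Finite.injective_iff_bijective.mp
      (caTrans_injective_of_ignoresLeft (· + ·) add_left_injective a b)
  exact ⟨hfixed, (rfl : rightFixedBC hn f102 b = fixedBC f102 a b) ▸ hfixed⟩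
end

section
/- Let f_102 be the local rule f_102(a,b,c) = b + c. For every integer n ≥ 1 and every a ∈ Q, none of the transition functions (f_102)_{(n),a-*}, (f_102)_{(n),*-*}, (f_102)_{(n),*} on Q^n is bijective; that is, CA-102_{a-*}(n), CA-102_{*-*}(n) and CA-102_{*}(n) are not reversible for any positive integer n. -/
theorem caTrans_const_eq_const {n : ℕ} {f : Rule} {c d : Q} (h : ∀ y, f y c c = d) (x0 : Q) :
    caTrans f x0 c (fun _ : Fin n => c) = fun _ => d := by
  funext i
  simp only [caTrans, dite_eq_ite, ite_self]
  exact h _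

theorem f102_self_self (y c : Q) : f102 y c c = 0 :=
  CharTwo.add_self_eq_zero c

theorem not_injective_of_map_zero_eq_map_one {n : ℕ} (hn : 0 < n) {F : Config n → Config n}
    (h : F (fun _ => 0) = F (fun _ => 1)) : ¬ Function.Injective F :=
  fun hF => zero_ne_one (congrFun (hF h) ⟨0, hn⟩)

theorem statement13 (n : ℕ) (hn : 1 ≤ n) (a : Q) :
    ¬ Function.Bijective (leftFixedBC hn f102 a) ∧
    ¬ Function.Bijective (freeBC hn f102) ∧
    ¬ Function.Bijective (cyclicBC hn f102) := by
  -- Under each boundary condition a constant word `c` sees `c` to its right, and `c + c = 0`.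
  have kills_const (x0 c : Q) : caTrans f102 x0 c (fun _ : Fin n => c) = fun _ => 0 :=
    caTrans_const_eq_const (f102_self_self · c) x0
  refine ⟨?_, ?_, ?_⟩ <;> refine fun hF => not_injective_of_map_zero_eq_map_one hn ?_ hF.injective
  · exact (kills_const a 0).trans (kills_const a 1).symm
  · exact (kills_const 0 0).trans (kills_const 1 1).symm
  · exact (kills_const 0 0).trans (kills_const 1 1).symm
end

section
/- Let f_150 be the local rule f_150(a,b,c) = a + b + c. For every integer n ≥ 1, the free-boundary transition function (f_150)_{(n),*-*} and the cyclic-boundary transition function (f_150)_{(n),*} on Q^n are bijective if and only if n is not divisible by 3; that is, CA-150_{*-*}(n) and CA-150_{*}(n) are reversible iff n ≢ 0 (mod 3). -/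
/-- Rule 150 : `f(a,b,c) = a + b + c`. -/
def f150 : Rule := fun a b c => a + b + c

/-! Rule 150 is additive, so on the finite set `Q^n` bijectivity amounts to a trivial kernel.
Extend a configuration by its two virtual boundary letters to a word `y₀ y₁ … yₙ₊₁`. It lies in
the kernel iff every window `y_k + y_{k+1} + y_{k+2}` vanishes, i.e. iff `y` is 3-periodic with
`y₀ + y₁ + y₂ = 0`. The boundary condition identifies `yₙ, yₙ₊₁` with `y₀, y₁` (cyclic) or
imposes `y₀ = y₁`, `yₙ = yₙ₊₁` (free); when `3 ∤ n` this forces `y₀ = y₁ = y₂`, hence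
`y₀ = 3 y₀ = 0`. When `3 ∣ n`, the padded words `110110…` (free) and `011011…` (cyclic) are
nonzero kernel elements. -/

open Function

lemma bijective_iff_map_eq_zero_of_map_add {G : Type*} [AddGroup G] [Finite G] {g : G → G}
    (hg : ∀ x y, g (x + y) = g x + g y) : Bijective g ↔ ∀ x, g x = 0 → x = 0 := by
  rw [← Finite.injective_iff_bijective]
  exact injective_iff_map_eq_zero (AddMonoidHom.mk' g hg)

lemma forall_sum_three_eq_zero_iff {G : Type*} [AddCommGroup G] {y : ℕ → G} {m : ℕ} (hm : 0 < m) :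
    (∀ k < m, y k + y (k + 1) + y (k + 2) = 0) ↔
      y 0 + y 1 + y 2 = 0 ∧ ∀ k ≤ m + 1, y k = y (k % 3) := by
  constructor
  · intro h
    refine ⟨h 0 hm, fun k hk => ?_⟩
    induction k using Nat.strong_induction_on with
    | _ k ih =>
      rcases lt_or_ge k 3 with hk3 | hk3
      · rw [Nat.mod_eq_of_lt hk3]
      obtain ⟨j, rfl⟩ : ∃ j, k = j + 3 := ⟨k - 3, by omega⟩
      have step : y (j + 3) = y j := by
        calc y (j + 3) = (y (j + 1) + y (j + 2) + y (j + 3)) - (y (j + 1) + y (j + 2)) := by abel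
          _ = y j := by rw [h (j + 1) (by omega), ← h j (by omega)]; abel
      rw [step, ih j (by omega) (by omega), Nat.add_mod_right]
  · rintro ⟨h012, hper⟩ k hk
    rw [hper k (by omega), hper (k + 1) (by omega), hper (k + 2) (by omega), ← h012]
    rcases (by omega : k % 3 = 0 ∨ k % 3 = 1 ∨ k % 3 = 2) with h | h | h
    · rw [h, show (k + 1) % 3 = 1 by omega, show (k + 2) % 3 = 2 by omega]
    · rw [h, show (k + 1) % 3 = 2 by omega, show (k + 2) % 3 = 0 by omega]; abel
    · rw [h, show (k + 1) % 3 = 0 by omega, show (k + 2) % 3 = 1 by omega]; abel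

section Padding

variable {n : ℕ}

/-- The word `x0 x(0) … x(n-1) xn1`, indexed from `0` (and `xn1` beyond). -/
def pad (x0 xn1 : Q) (x : Config n) (k : ℕ) : Q :=
  if k = 0 then x0 else if h : k - 1 < n then x ⟨k - 1, h⟩ else xn1

variable (x0 xn1 : Q) (x : Config n)

lemma pad_zero : pad x0 xn1 x 0 = x0 := rfl

lemma pad_succ (i : Fin n) : pad x0 xn1 x (i + 1) = x i := by
  simp [pad]

lemma pad_add_one_self : pad x0 xn1 x (n + 1) = xn1 := by
  simp [pad]

lemma pad_one (hn : 0 < n) : pad x0 xn1 x 1 = firstCell hn x :=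
  pad_succ x0 xn1 x ⟨0, hn⟩

lemma pad_self (hn : 0 < n) : pad x0 xn1 x n = lastCell hn x := by
  simpa [lastCell, Nat.sub_add_cancel hn] using pad_succ x0 xn1 x ⟨n - 1, Nat.sub_lt hn Nat.one_pos⟩

lemma pad_add (x0' xn1' : Q) (x' : Config n) (k : ℕ) :
    pad (x0 + x0') (xn1 + xn1') (x + x') k = pad x0 xn1 x k + pad x0' xn1' x' k := by
  unfold pad
  split_ifs <;> rfl

lemma caTrans_apply_eq_pad (f : Rule) (i : Fin n) :
    caTrans f x0 xn1 x i = f (pad x0 xn1 x i) (pad x0 xn1 x (i + 1)) (pad x0 xn1 x (i + 2)) := by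
  obtain ⟨i, hi⟩ := i
  by_cases h0 : i = 0 <;> by_cases h1 : i + 1 < n <;>
    simp [caTrans, pad, hi, h0, h1, show i - 1 < n by omega, show 0 < n by omega]

end Padding

section Rule150

variable {n : ℕ}

lemma caTrans_f150_add (x0 xn1 x0' xn1' : Q) (x x' : Config n) :
    caTrans f150 (x0 + x0') (xn1 + xn1') (x + x') =
      caTrans f150 x0 xn1 x + caTrans f150 x0' xn1' x' := by
  funext i
  simp only [Pi.add_apply, caTrans_apply_eq_pad, pad_add, f150]
  abel

lemma freeBC_f150_add (hn : 0 < n) (x x' : Config n) :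
    freeBC hn f150 (x + x') = freeBC hn f150 x + freeBC hn f150 x' :=
  caTrans_f150_add _ _ _ _ x x'

lemma cyclicBC_f150_add (hn : 0 < n) (x x' : Config n) :
    cyclicBC hn f150 (x + x') = cyclicBC hn f150 x + cyclicBC hn f150 x' :=
  caTrans_f150_add _ _ _ _ x x'

lemma caTrans_f150_eq_zero_iff (hn : 0 < n) (x0 xn1 : Q) (x : Config n) :
    caTrans f150 x0 xn1 x = 0 ↔
      pad x0 xn1 x 0 + pad x0 xn1 x 1 + pad x0 xn1 x 2 = 0 ∧
        ∀ k ≤ n + 1, pad x0 xn1 x k = pad x0 xn1 x (k % 3) := by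
  rw [← forall_sum_three_eq_zero_iff hn, funext_iff]
  exact ⟨fun h k hk => by simpa [caTrans_apply_eq_pad, f150] using h ⟨k, hk⟩,
    fun h i => by simpa [caTrans_apply_eq_pad, f150] using h i i.2⟩

lemma caTrans_f150_periodic_eq_zero {p : ℕ → Q} (hp : p 0 + p 1 + p 2 = 0) (hper : Periodic p 3) :
    caTrans f150 (p 0) (p (n + 1)) (fun i : Fin n => p (i + 1)) = 0 := by
  have hpad : ∀ k ≤ n + 1, pad (p 0) (p (n + 1)) (fun i : Fin n => p (i + 1)) k = p k := by
    intro k hk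
    rcases Nat.eq_zero_or_pos k with rfl | hk0
    · rfl
    rcases hk.lt_or_eq with hk | rfl
    · simpa [Nat.sub_add_cancel hk0] using
        pad_succ (p 0) (p (n + 1)) (fun i : Fin n => p (i + 1)) ⟨k - 1, by omega⟩
    · exact pad_add_one_self _ _ _
  funext i
  rw [caTrans_apply_eq_pad, hpad _ (by omega), hpad _ (by omega), hpad _ (by omega)]
  exact (forall_sum_three_eq_zero_iff (Nat.succ_pos i)).2
    ⟨hp, fun k _ => (hper.map_mod_nat k).symm⟩ i (Nat.lt_succ_self i)

lemma eq_zero_of_pad_periodic {x0 xn1 : Q} {x : Config n}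
    (hper : ∀ k ≤ n + 1, pad x0 xn1 x k = pad x0 xn1 x (k % 3))
    (hsum : pad x0 xn1 x 0 + pad x0 xn1 x 1 + pad x0 xn1 x 2 = 0)
    (h01 : pad x0 xn1 x 0 = pad x0 xn1 x 1) (h12 : pad x0 xn1 x 1 = pad x0 xn1 x 2) : x = 0 := by
  have hzero : ∀ r < 3, pad x0 xn1 x r = 0 := by
    have h2 : pad x0 xn1 x 2 = 0 := by
      rw [h01, h12] at hsum
      exact (by decide : ∀ a : ZMod 2, a + a + a = 0 → a = 0) _ hsum
    intro r hr
    interval_cases r <;> simp only [h01, h12, h2]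
  funext i
  rw [← pad_succ x0 xn1 x i, hper _ (by omega)]
  exact hzero _ (Nat.mod_lt _ three_pos)

lemma freeBC_f150_trivial_kernel_iff (hn : 0 < n) :
    (∀ x, freeBC hn f150 x = 0 → x = 0) ↔ n % 3 ≠ 0 := by
  constructor
  · intro h h3
    let p : ℕ → Q := fun k => if k % 3 = 2 then 0 else 1
    have hp : Periodic p 3 := fun k => by simp [p]
    have hx : freeBC hn f150 (fun i => p (i + 1)) = 0 := by
      show caTrans f150 _ _ (fun i : Fin n => p (i + 1)) = 0
      convert caTrans_f150_periodic_eq_zero (n := n) (by decide) hp using 2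
      · simp [p, firstCell]
      · simp [p, lastCell, Nat.sub_add_cancel hn, h3, show (n + 1) % 3 = 1 by omega]
    simpa [p] using congrFun (h _ hx) ⟨0, hn⟩
  · intro h3 x hx
    obtain ⟨hsum, hper⟩ := (caTrans_f150_eq_zero_iff hn _ _ x).1 hx
    set y := pad (firstCell hn x) (lastCell hn x) x
    have hleft : y 0 = y 1 := (pad_one _ _ x hn).symm
    have hright : y n = y (n + 1) := (pad_self _ _ x hn).trans (pad_add_one_self _ _ x).symm
    rw [hper n (by omega), hper (n + 1) le_rfl] at hright
    refine eq_zero_of_pad_periodic hper hsum hleft ?_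
    rcases (by omega : n % 3 = 1 ∨ n % 3 = 2) with h | h
    · rwa [h, show (n + 1) % 3 = 2 by omega] at hright
    · rw [h, show (n + 1) % 3 = 0 by omega] at hright
      exact hleft.symm.trans hright.symm

lemma cyclicBC_f150_trivial_kernel_iff (hn : 0 < n) :
    (∀ x, cyclicBC hn f150 x = 0 → x = 0) ↔ n % 3 ≠ 0 := by
  constructor
  · intro h h3
    let p : ℕ → Q := fun k => if k % 3 = 0 then 0 else 1
    have hp : Periodic p 3 := fun k => by simp [p]
    have hx : cyclicBC hn f150 (fun i => p (i + 1)) = 0 := by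
      show caTrans f150 _ _ (fun i : Fin n => p (i + 1)) = 0
      convert caTrans_f150_periodic_eq_zero (n := n) (by decide) hp using 2
      · simp [p, lastCell, Nat.sub_add_cancel hn, h3]
      · simp [p, firstCell, show (n + 1) % 3 = 1 by omega]
    simpa [p] using congrFun (h _ hx) ⟨0, hn⟩
  · intro h3 x hx
    obtain ⟨hsum, hper⟩ := (caTrans_f150_eq_zero_iff hn _ _ x).1 hx
    set y := pad (lastCell hn x) (firstCell hn x) x
    have hleft : y 0 = y n := (pad_self _ _ x hn).symm
    have hright : y (n + 1) = y 1 := (pad_add_one_self _ _ x).trans (pad_one _ _ x hn).symm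
    rw [hper n (by omega)] at hleft
    rw [hper (n + 1) le_rfl] at hright
    rcases (by omega : n % 3 = 1 ∨ n % 3 = 2) with h | h
    · rw [h] at hleft
      rw [show (n + 1) % 3 = 2 by omega] at hright
      exact eq_zero_of_pad_periodic hper hsum hleft hright.symm
    · rw [h] at hleft
      rw [show (n + 1) % 3 = 0 by omega] at hright
      exact eq_zero_of_pad_periodic hper hsum hright (hright.symm.trans hleft)

end Rule150

theorem statement15 (n : ℕ) (hn : 1 ≤ n) :
    (Function.Bijective (freeBC hn f150) ↔ n % 3 ≠ 0) ∧
    (Function.Bijective (cyclicBC hn f150) ↔ n % 3 ≠ 0) :=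
  ⟨(bijective_iff_map_eq_zero_of_map_add (freeBC_f150_add hn)).trans
      (freeBC_f150_trivial_kernel_iff hn),
    (bijective_iff_map_eq_zero_of_map_add (cyclicBC_f150_add hn)).trans
      (cyclicBC_f150_trivial_kernel_iff hn)⟩
end

section
/- Let f_150 be the local rule f_150(a,b,c) = a + b + c. For every integer n ≥ 1 and all a, b ∈ Q, the fixed-boundary transition function (f_150)_{(n),a-b} : Q^n → Q^n is bijective if and only if n ≢ 2 (mod 3); that is, CA-150_{a-b}(n) is reversible iff n ≢ 2 (mod 3). -/
section Aux

private lemma self2' : ∀ c : Q, c + c = 0 := by decide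

private lemma solve3' : ∀ a b c : Q, a + b + c = 0 → c = a + b := by decide

private lemma eq_of_add_zero' : ∀ a b : Q, a + b = 0 → a = b := by decide

/-- Pointwise additivity of rule-150 fixed-boundary transitions. -/
private lemma addT' {n : ℕ} (a b : Q) (x y : Config n) (i : Fin n) :
    fixedBC f150 a b x i + fixedBC f150 a b y i = fixedBC f150 0 0 (x + y) i := by
  simp only [fixedBC, caTrans, f150, Pi.add_apply]
  split_ifs
  · linear_combination self2' a
  · linear_combination self2' a + self2' b
  · ring
  · linear_combination self2' b

/-- Fibonacci modulo 2, i.e. the period-3 pattern `1,1,0,1,1,0,...`. -/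
private def g' (j : ℕ) : Q := if j % 3 = 2 then 0 else 1

private lemma g_rec' (k : ℕ) : g' (k + 2) = g' k + g' (k + 1) := by
  have h : k % 3 = 0 ∨ k % 3 = 1 ∨ k % 3 = 2 := by omega
  rcases h with h | h | h <;> simp [g', Nat.add_mod, h] <;> decide

/-- Kernel triviality when `n % 3 ≠ 2`. -/
private lemma ker' {n : ℕ} (hn : 1 ≤ n) (h3 : n % 3 ≠ 2) (z : Config n)
    (hz : ∀ i, fixedBC f150 0 0 z i = 0) : ∀ i, z i = 0 := by
  have hn0 : 0 < n := hn
  set z0 : Q := z ⟨0, hn0⟩ with hz0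
  have step : ∀ j, ∀ hj : j < n, z ⟨j, hj⟩ = z0 * g' j := by
    intro j
    induction j using Nat.strong_induction_on with
    | _ j ih =>
      match j with
      | 0 => intro hj; simp [g', hz0]
      | 1 =>
        intro hj
        have e := hz ⟨0, hn0⟩
        simp only [fixedBC, caTrans, f150] at e
        rw [dif_pos trivial, dif_pos (by omega : (0:ℕ) + 1 < n)] at e
        have := solve3' _ _ _ e
        simpa [g'] using this
      | (k+2) =>
        intro hj
        have e := hz ⟨k + 1, by omega⟩
        simp only [fixedBC, caTrans, f150] at e
        rw [dif_neg (by omega : ¬ (k+1) = 0), dif_pos (by omega : k + 1 + 1 < n)] at e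
        simp only [Nat.add_sub_cancel] at e
        have h1 := ih k (by omega) (by omega)
        have h2 := ih (k+1) (by omega) (by omega)
        have := solve3' _ _ _ e
        rw [this, h1, h2, g_rec']
        ring
  have hz0eq : z0 = 0 := by
    rcases Nat.lt_or_ge 1 n with h | h
    · have e := hz ⟨n - 1, by omega⟩
      simp only [fixedBC, caTrans, f150] at e
      rw [dif_neg (by omega : ¬ n - 1 = 0), dif_neg (by omega : ¬ n - 1 + 1 < n)] at e
      have e1 := step (n - 1 - 1) (by omega)
      have e2 := step (n - 1) (by omega)
      rw [e1, e2] at e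
      have hg : g' (n - 1 - 1) + g' (n - 1) = 1 := by
        have hm : n % 3 = 0 ∨ n % 3 = 1 := by omega
        rcases hm with hm | hm
        · have h1 : (n - 1 - 1) % 3 = 1 := by omega
          have h2 : (n - 1) % 3 = 2 := by omega
          simp [g', h1, h2]
        · have h1 : (n - 1 - 1) % 3 = 2 := by omega
          have h2 : (n - 1) % 3 = 0 := by omega
          simp [g', h1, h2]
      calc z0 = z0 * g' (n - 1 - 1) + z0 * g' (n - 1) + 0 := by
            rw [← mul_add, hg]; ring
        _ = 0 := e
    · have e := hz ⟨0, hn0⟩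
      simp only [fixedBC, caTrans, f150] at e
      rw [dif_pos trivial, dif_neg (by omega : ¬ (0:ℕ) + 1 < n)] at e
      simpa [hz0] using e
  intro i
  have := step i.1 i.isLt
  rw [hz0eq] at this
  simpa using this

/-- The explicit kernel element when `n % 3 = 2`. -/
private lemma wker' {n : ℕ} (h3 : n % 3 = 2) (i : Fin n) :
    fixedBC f150 0 0 (fun j : Fin n => g' j.1) i = 0 := by
  have hn2 : 2 ≤ n := by omega
  simp only [fixedBC, caTrans, f150]
  by_cases h0 : i.1 = 0
  · rw [dif_pos h0, dif_pos (by omega : i.1 + 1 < n), h0]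
    decide
  · rw [dif_neg h0]
    obtain ⟨m, hm⟩ : ∃ m, i.1 = m + 1 := ⟨i.1 - 1, by omega⟩
    by_cases h1 : i.1 + 1 < n
    · rw [dif_pos h1]
      simp only [hm, Nat.add_sub_cancel]
      rw [show g' (m + 1 + 1) = g' (m + 2) from rfl, g_rec']
      linear_combination self2' (g' m) + self2' (g' (m+1))
    · rw [dif_neg h1]
      have hi : i.1 = n - 1 := by omega
      have e1 : (i.1 - 1) % 3 = 0 := by omega
      have e2 : i.1 % 3 = 1 := by omega
      simp [g', e1, e2]
      decide

end Aux

theorem statement16 (n : ℕ) (hn : 1 ≤ n) (a b : Q) :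
    Function.Bijective (fixedBC (n := n) f150 a b) ↔ n % 3 ≠ 2 := by
  constructor
  · intro hbij
    intro h3
    have hw : fixedBC (n := n) f150 a b (fun j : Fin n => g' j.1) = fixedBC f150 a b 0 := by
      funext i
      apply eq_of_add_zero'
      rw [addT' a b _ 0 i, add_zero]
      exact wker' h3 i
    have heq := hbij.injective hw
    have := congrFun heq ⟨0, by omega⟩
    simp [g', Pi.zero_apply] at this
  · intro h3
    rw [← Finite.injective_iff_bijective]
    intro x y hxy
    have hz : ∀ i, fixedBC f150 0 0 (x + y) i = 0 := by
      intro i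
      rw [← addT' a b x y i, hxy]
      exact self2' _
    have hk := ker' hn h3 (x + y) hz
    funext i
    exact eq_of_add_zero' _ _ (hk i)
end

section
/- Let f_150 be the local rule f_150(a,b,c) = a + b + c. For every integer n ≥ 1 and all a, b ∈ Q, the transition functions (f_150)_{(n),a-*} and (f_150)_{(n),*-b} on Q^n are bijective if and only if n ≢ 1 (mod 3); that is, CA-150_{a-*}(n) and CA-150_{*-b}(n) are reversible iff n ≢ 1 (mod 3). -/
/-!
Rule 150 is affine, so `T_a x - T_a y = T_0 (x - y)` for the `a-*` transition `T_a`, and `T_a`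
is injective (hence bijective, `Q^n` being finite) iff `T_0` has trivial kernel. A kernel element
`d` satisfies `d₁ = d₀` and `d_{i+2} = d_i + d_{i+1}` (cells indexed from `0`), so it is
`d₀ · 110110…`; the last cell adds the condition `d_{n-2} = 0`, which kills `d₀` unless
`n ≡ 1 (mod 3)`. The `*-b` boundary is the mirror image of the `b-*` boundary, and rule 150 is
symmetric.
-/

section CaTrans

variable {n : ℕ} (f : Rule) (x0 xn1 : Q) (x : Config n)

theorem caTrans_apply_zero (h : 1 < n) :
    caTrans f x0 xn1 x ⟨0, by omega⟩ = f x0 (x ⟨0, by omega⟩) (x ⟨1, h⟩) := by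
  simp [caTrans, h]

theorem caTrans_apply_succ {i : ℕ} (h : i + 2 < n) :
    caTrans f x0 xn1 x ⟨i + 1, by omega⟩ =
      f (x ⟨i, by omega⟩) (x ⟨i + 1, by omega⟩) (x ⟨i + 2, h⟩) := by
  simp [caTrans, h]

theorem caTrans_apply_last {i : ℕ} (h : i + 2 = n) :
    caTrans f x0 xn1 x ⟨i + 1, by omega⟩ = f (x ⟨i, by omega⟩) (x ⟨i + 1, by omega⟩) xn1 := by
  simp [caTrans, show ¬ i + 1 + 1 < n by omega]

theorem caTrans_comp_rev :
    caTrans f x0 xn1 (x ∘ Fin.rev) = caTrans (fun p q r => f r q p) xn1 x0 x ∘ Fin.rev := by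
  funext i
  simp only [caTrans, Function.comp_apply]
  congr 1 <;> simp only [Fin.val_rev] <;> split_ifs <;>
    first | rfl | omega | (congr 1; ext; simp only [Fin.val_rev]; omega)

end CaTrans

theorem rightFixedBC_eq_leftFixedBC_rev {n : ℕ} (hn : 0 < n) (f : Rule) (b : Q) (x : Config n) :
    rightFixedBC hn f b x = leftFixedBC hn (fun p q r => f r q p) b (x ∘ Fin.rev) ∘ Fin.rev := by
  have hlast : lastCell hn (x ∘ Fin.rev) = firstCell hn x :=
    congrArg x (Fin.ext (by simp only [Fin.val_rev]; omega))
  rw [leftFixedBC, hlast, caTrans_comp_rev]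
  funext i
  simp [rightFixedBC]

theorem bijective_rightFixedBC_iff {n : ℕ} (hn : 0 < n) (f : Rule) (b : Q) :
    Function.Bijective (rightFixedBC hn f b) ↔
      Function.Bijective (leftFixedBC hn (fun p q r => f r q p) b) := by
  let R : Config n ≃ Config n :=
    Function.Involutive.toPerm (· ∘ Fin.rev) fun x => funext fun i => by simp
  have hR : rightFixedBC hn f b = R ∘ leftFixedBC hn (fun p q r => f r q p) b ∘ R :=
    funext (rightFixedBC_eq_leftFixedBC_rev hn f b)
  rw [hR, Equiv.comp_bijective, Equiv.bijective_comp]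

def kerWord (n : ℕ) : Config n := fun i => if i.1 % 3 = 2 then 0 else 1

section Rule150

variable {n : ℕ} (hn : 0 < n)

theorem leftFixedBC_f150_sub (a : Q) (x y : Config n) :
    leftFixedBC hn f150 a x - leftFixedBC hn f150 a y = leftFixedBC hn f150 0 (x - y) := by
  funext i
  simp only [leftFixedBC, caTrans, f150, lastCell, Pi.sub_apply]
  split_ifs <;> ring

theorem injective_leftFixedBC_f150_iff_ker (a : Q) :
    Function.Injective (leftFixedBC hn f150 a) ↔ ∀ d, leftFixedBC hn f150 0 d = 0 → d = 0 := by
  constructor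
  · intro hinj d hd
    apply hinj
    rw [← sub_eq_zero, leftFixedBC_f150_sub, sub_zero, hd]
  · intro hker x y hxy
    rw [← sub_eq_zero]
    apply hker
    rw [← leftFixedBC_f150_sub, hxy, sub_self]

theorem eq_smul_kerWord {d : Config n} (hd : leftFixedBC hn f150 0 d = 0) :
    d = d ⟨0, hn⟩ • kerWord n := by
  suffices h : ∀ i (hi : i < n), d ⟨i, hi⟩ = d ⟨0, hn⟩ * if i % 3 = 2 then 0 else 1 from
    funext fun i => h i i.2
  intro i
  induction i using Nat.strong_induction_on with
  | _ i ih =>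
    intro hi
    match i, ih, hi with
    | 0, _, _ => simp
    | 1, _, hi =>
      have e := congrFun hd ⟨0, hn⟩
      simp only [leftFixedBC, caTrans_apply_zero _ _ _ _ hi, f150, Pi.zero_apply, zero_add,
        CharTwo.add_eq_zero] at e
      simp [e]
    | i + 2, ih, hi =>
      have e := congrFun hd ⟨i + 1, by omega⟩
      simp only [leftFixedBC, caTrans_apply_succ _ _ _ _ hi, f150, Pi.zero_apply,
        CharTwo.add_eq_zero] at e
      rw [← e, ih i (by omega), ih (i + 1) (by omega)]
      rcases (by omega : i % 3 = 0 ∨ i % 3 = 1 ∨ i % 3 = 2) with h | h | h <;>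
        simp [h, Nat.add_mod, CharTwo.add_self_eq_zero]

theorem leftFixedBC_f150_zero_kerWord (h : n % 3 = 1) :
    leftFixedBC hn f150 0 (kerWord n) = 0 := by
  funext ⟨i, hi⟩
  simp only [leftFixedBC, caTrans, f150, kerWord, lastCell, Pi.zero_apply]
  split_ifs <;> first | omega | decide

theorem injective_leftFixedBC_f150_iff (a : Q) :
    Function.Injective (leftFixedBC hn f150 a) ↔ n % 3 ≠ 1 := by
  rw [injective_leftFixedBC_f150_iff_ker]
  constructor
  · intro hker h1
    have h0 := congrFun (hker _ (leftFixedBC_f150_zero_kerWord hn h1)) ⟨0, hn⟩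
    simp [kerWord] at h0
  · intro h3 d hd
    obtain ⟨m, rfl⟩ : ∃ m, n = m + 2 := ⟨n - 2, by omega⟩
    have hlast : d ⟨m, by omega⟩ = 0 := by
      simpa only [leftFixedBC, caTrans_apply_last _ _ _ _ rfl, f150, Pi.zero_apply,
        show lastCell hn d = d ⟨m + 1, by omega⟩ from rfl, add_assoc, CharTwo.add_self_eq_zero,
        add_zero] using congrFun hd ⟨m + 1, by omega⟩
    have hm := congrFun (eq_smul_kerWord hn hd) ⟨m, by omega⟩
    simp only [kerWord, Pi.smul_apply, smul_eq_mul, if_neg (show m % 3 ≠ 2 by omega), mul_one,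
      hlast] at hm
    rw [eq_smul_kerWord hn hd, ← hm, zero_smul]

theorem bijective_leftFixedBC_f150_iff (a : Q) :
    Function.Bijective (leftFixedBC hn f150 a) ↔ n % 3 ≠ 1 := by
  rw [← Finite.injective_iff_bijective, injective_leftFixedBC_f150_iff]
end Rule150

theorem statement17 (n : ℕ) (hn : 1 ≤ n) (a b : Q) :
    (Function.Bijective (leftFixedBC hn f150 a) ↔ n % 3 ≠ 1) ∧
    (Function.Bijective (rightFixedBC hn f150 b) ↔ n % 3 ≠ 1) := by
  have hsymm : (fun p q r => f150 r q p) = f150 := by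
    funext p q r
    simp only [f150]
    abel
  refine ⟨bijective_leftFixedBC_f150_iff hn a, ?_⟩
  rw [bijective_rightFixedBC_iff, hsymm, bijective_leftFixedBC_f150_iff]
end

section
/- Let n ≥ 1, represent a cyclic configuration of length n as x : ZMod n → Q, and let δ : (ZMod n → Q) → (ZMod n → Q) be the cyclic transition function of rule 166, (δ x)(m) = (x(m-1) + 1)·x(m) + x(m+1). Then for all natural numbers k and all m ∈ ZMod n, the 2^k-fold iterate satisfies (δ^[2^k] x)(m) = (x(m - 2^k) + 1) · ∏_{j=1}^{2^k} x(m - 2^k + 2j - 1) + x(m + 2^k), where all index arithmetic is taken in ZMod n. -/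
/-- The cyclic transition function of rule 166 on configurations `ZMod n → Q` :
`(δ x)(m) = (x(m-1) + 1) * x(m) + x(m+1)`. -/
def delta166 {n : ℕ} (x : ZMod n → Q) : ZMod n → Q :=
  fun m => (x (m - 1) + 1) * x m + x (m + 1)

/-!
Write `F_N x m = (x (m - N) + 1) * x (m - N + 1) * x (m - N + 3) * ⋯ * x (m + N - 1) + x (m + N)`.
Then `δ = F_1`, and `F_N ∘ F_N = F_{2N}`, which gives the claim by induction on `k`. For the
doubling identity put `y = F_N x`: each of `y (m - N)`, `y (m - N + 2j + 1)`, `y (m + N)` is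
again given by `F_N`, and since cells are Boolean the factor `y (m - N) + 1` makes every
`y (m - N + 2j + 1)` interchangeable with `x (m + 2j + 1)`; what remains cancels in
characteristic 2.
-/

theorem Finset.mul_prod_congr_of_mul_eq {ι M : Type*} [CommMonoid M] {s : Finset ι} {u : M}
    {f g : ι → M} (h : ∀ i ∈ s, u * f i = u * g i) :
    u * ∏ i ∈ s, f i = u * ∏ i ∈ s, g i := by
  classical
  induction s using Finset.induction_on with
  | empty => rfl
  | insert a s ha ih =>
    simp only [Finset.mem_insert, forall_eq_or_imp] at h
    rw [Finset.prod_insert ha, Finset.prod_insert ha, mul_left_comm, ih h.2, mul_left_comm (f a),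
      ← mul_assoc, h.1, mul_assoc]

theorem ZMod.mul_add_one_self_eq_zero (t : ZMod 2) : t * (t + 1) = 0 := by
  revert t; decide

section Rule166

variable {n : ℕ}

def oddProd (N : ℕ) (x : ZMod n → Q) (a : ZMod n) : Q :=
  ∏ j ∈ Finset.range N, x (a + 2 * j + 1)

def iterClosedForm (N : ℕ) (x : ZMod n → Q) (m : ZMod n) : Q :=
  (x (m - N) + 1) * oddProd N x (m - N) + x (m + N)

theorem prod_Icc_eq_oddProd (N : ℕ) (x : ZMod n → Q) (a : ZMod n) :
    ∏ j ∈ Finset.Icc 1 N, x (a + ((2 * j - 1 : ℕ) : ZMod n)) = oddProd N x a := by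
  rw [← Finset.Ico_add_one_right_eq_Icc, Finset.prod_Ico_eq_prod_range, Nat.add_sub_cancel,
    oddProd]
  refine Finset.prod_congr rfl fun j _ => congrArg x ?_
  rw [show 2 * (1 + j) - 1 = 2 * j + 1 by omega]
  push_cast
  ring

theorem oddProd_add (N M : ℕ) (x : ZMod n → Q) (a : ZMod n) :
    oddProd (N + M) x a = oddProd N x a * oddProd M x (a + 2 * N) := by
  simp only [oddProd, Finset.prod_range_add]
  refine congrArg _ (Finset.prod_congr rfl fun j _ => congrArg x ?_)
  push_cast
  ring

theorem iterClosedForm_apply_eq (N : ℕ) (x : ZMod n → Q) {a b c : ZMod n} (hb : b = a + N)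
    (hc : c = a + 2 * N) : iterClosedForm N x b = (x a + 1) * oddProd N x a + x c := by
  rw [iterClosedForm, hb, hc, add_sub_cancel_right, add_assoc, ← two_mul]

theorem delta166_eq_iterClosedForm_one :
    (delta166 : (ZMod n → Q) → ZMod n → Q) = iterClosedForm 1 := by
  funext x m
  simp [delta166, iterClosedForm, oddProd]

theorem iterClosedForm_iterClosedForm (N : ℕ) (x : ZMod n → Q) :
    iterClosedForm N (iterClosedForm N x) = iterClosedForm (2 * N) x := by
  funext m
  set y := iterClosedForm N x
  set A := oddProd N x (m - 2 * N)
  set B := oddProd N x m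
  have hy_left : y (m - N) = (x (m - 2 * N) + 1) * A + x m :=
    iterClosedForm_apply_eq N x (by ring) (by ring)
  have hy_right : y (m + N) = (x m + 1) * B + x (m + 2 * N) :=
    iterClosedForm_apply_eq N x (by ring) (by ring)
  have hinner : (y (m - N) + 1) * oddProd N y (m - N) = (y (m - N) + 1) * B := by
    refine Finset.mul_prod_congr_of_mul_eq fun j hj => ?_
    have hjN : j < N := Finset.mem_range.mp hj
    set c := x (m - 2 * N + 2 * j + 1)
    set P := oddProd N x (m - 2 * N + 2 * j + 1)
    have hy : y (m - N + 2 * j + 1) = (c + 1) * P + x (m + 2 * j + 1) :=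
      iterClosedForm_apply_eq N x (by ring) (by ring)
    obtain ⟨A', hA⟩ : c ∣ A :=
      Finset.dvd_prod_of_mem (fun i : ℕ => x (m - 2 * N + 2 * i + 1))
        (Finset.mem_range.mpr hjN)
    obtain ⟨P', hP⟩ : x m ∣ P := by
      show x m ∣ ∏ i ∈ Finset.range N, x (m - 2 * N + 2 * j + 1 + 2 * i + 1)
      have := Finset.dvd_prod_of_mem (fun i : ℕ => x (m - 2 * N + 2 * j + 1 + 2 * i + 1))
        (Finset.mem_range.mpr (show N - 1 - j < N by omega))
      convert this using 2
      rw [Nat.cast_sub (by omega), Nat.cast_sub (by omega)]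
      ring
    -- `(y (m - N) + 1) * (c + 1) * P` vanishes since `t * (t + 1) = 0` for `t = c` and `t = x m`.
    rw [hy, hy_left, hA, hP]
    linear_combination (x (m - 2 * N) + 1) * A' * x m * P' * ZMod.mul_add_one_self_eq_zero c +
      (c + 1) * P' * ZMod.mul_add_one_self_eq_zero (x m)
  have htwo : (2 : Q) = 0 := rfl
  have hAB : oddProd (2 * N) x (m - 2 * N) = A * B := by
    rw [two_mul N, oddProd_add, sub_add_cancel]
  rw [iterClosedForm, hinner, hy_right, hy_left, iterClosedForm, Nat.cast_mul, Nat.cast_ofNat,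
    hAB]
  linear_combination (x m + 1) * B * htwo

theorem delta166_iterate_two_pow (k : ℕ) :
    (delta166 : (ZMod n → Q) → ZMod n → Q)^[2 ^ k] = iterClosedForm (2 ^ k) := by
  induction k with
  | zero => rw [pow_zero, Function.iterate_one, delta166_eq_iterClosedForm_one]
  | succ k ih =>
    funext x
    rw [pow_succ, Function.iterate_mul, ih, Function.iterate_succ_apply, Function.iterate_one,
      iterClosedForm_iterClosedForm, mul_comm]

end Rule166

theorem statement18_general (n : ℕ) (x : ZMod n → Q) (k : ℕ) (m : ZMod n) :
    (delta166^[2 ^ k] x) m =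
      (x (m - (2 ^ k : ℕ)) + 1) *
        (∏ j ∈ Finset.Icc 1 (2 ^ k), x (m - (2 ^ k : ℕ) + ((2 * j - 1 : ℕ) : ZMod n)))
      + x (m + (2 ^ k : ℕ)) := by
  rw [delta166_iterate_two_pow, prod_Icc_eq_oddProd]
  rfl

theorem statement18 (n : ℕ) (hn : 1 ≤ n) (x : ZMod n → Q) (k : ℕ) (m : ZMod n) :
    (delta166^[2 ^ k] x) m =
      (x (m - (2 ^ k : ℕ)) + 1) *
        (∏ j ∈ Finset.Icc 1 (2 ^ k), x (m - (2 ^ k : ℕ) + ((2 * j - 1 : ℕ) : ZMod n)))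
      + x (m + (2 ^ k : ℕ)) :=
  statement18_general n x k m
end
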